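/- p is twice differentiable on Ω and harmonic: Δp = ∂²p/∂x² + ∂²p/∂y² + ∂²p/∂z² = 0 at every point of Ω. -/

import Mathlib

open MeasureTheory

noncomputable section

abbrev P3 := ℝ × ℝ × ℝ

/-- Opening angle `ω = 3π/2`. -/
def om : ℝ := 3 * Real.pi / 2

/-- The domain `Ω = G × (0,1)`, where `G` is the open unit sector of opening angle `ω = 3π/2`. -/
def OmegaSet : Set P3 :=
  {x | ∃ r θ z : ℝ, 0 < r ∧ r < 1 ∧ 0 < θ ∧ θ < om ∧ 0 < z ∧ z < 1 ∧
    x = (r * Real.cos θ, r * Real.sin θ, z)}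

/-- `Φ(φ) = 2λ[sin(ω + (λ−1)φ) − sin(λω − (λ−1)φ)]`. -/
def Phi (lam θ : ℝ) : ℝ :=
  2 * lam * (Real.sin (om + (lam - 1) * θ) - Real.sin (lam * om - (lam - 1) * θ))

/-- First velocity component in polar coordinates. -/
def u1pol (lam r θ z : ℝ) : ℝ :=
  z * r ^ lam * (-(lam * Real.sin θ * Real.cos (lam * (om - θ) + θ)) +
    lam * Real.sin (om - θ) * Real.cos (lam * θ - θ) + Real.sin (lam * (om - θ)))

/-- Second velocity component in polar coordinates. -/
def u2pol (lam r θ z : ℝ) : ℝ :=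
  z * r ^ lam * (Real.sin (lam * θ) - lam * Real.sin θ * Real.sin (lam * (om - θ) + θ) -
    lam * Real.sin (om - θ) * Real.sin (lam * θ - θ))

/-- Third velocity component in polar coordinates. -/
def u3pol (r θ : ℝ) : ℝ := r ^ ((2 : ℝ) / 3) * Real.sin (2 / 3 * θ)

/-- Directional (partial) derivative of a scalar field in direction `v`. -/
def pd (f : P3 → ℝ) (v x : P3) : ℝ := fderiv ℝ f x v

/-- Second partial derivative (direction `v`, twice). -/
def pd2 (f : P3 → ℝ) (v x : P3) : ℝ := fderiv ℝ (fun y => fderiv ℝ f y v) x v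

/-- Laplacian of a scalar field on `ℝ³`. -/
def lap3 (f : P3 → ℝ) (x : P3) : ℝ :=
  pd2 f (1, 0, 0) x + pd2 f (0, 1, 0) x + pd2 f (0, 0, 1) x

/-- Gradient of a scalar field on `ℝ³`. -/
def grad3 (f : P3 → ℝ) (x : P3) : P3 :=
  (pd f (1, 0, 0) x, pd f (0, 1, 0) x, pd f (0, 0, 1) x)

/-- Divergence of a vector field on `ℝ³`. -/
def div3 (u : P3 → P3) (x : P3) : ℝ :=
  pd (fun y => (u y).1) (1, 0, 0) x + pd (fun y => (u y).2.1) (0, 1, 0) x +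
    pd (fun y => (u y).2.2) (0, 0, 1) x

/-- Componentwise Laplacian of a vector field on `ℝ³`. -/
def vlap (u : P3 → P3) (x : P3) : P3 :=
  (lap3 (fun y => (u y).1) x, lap3 (fun y => (u y).2.1) x, lap3 (fun y => (u y).2.2) x)

/-- Pressure in polar coordinates: `p = z r^{λ−1} Φ(φ)`. -/
def ppol (lam r θ z : ℝ) : ℝ := z * r ^ (lam - 1) * Phi lam θ

/-- First component of the data `f` in polar coordinates. -/
def f1pol (lam ν r θ z : ℝ) : ℝ :=
  2 * lam * (lam - 1) * (ν - 1) * z * r ^ (lam - 2) *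
    (Real.sin (lam * om - (lam - 2) * θ) - Real.sin (om + (lam - 2) * θ))

/-- Second component of the data `f` in polar coordinates. -/
def f2pol (lam ν r θ z : ℝ) : ℝ :=
  2 * lam * (lam - 1) * (1 - ν) * z * r ^ (lam - 2) *
    (Real.cos (lam * om - (lam - 2) * θ) + Real.cos (om + (lam - 2) * θ))

/-- Third component of the data `f` in polar coordinates. -/
def f3pol (lam r θ : ℝ) : ℝ := r ^ (lam - 1) * Phi lam θ

/-!
In polar coordinates `r ^ (λ - 1) * Φ φ` is the real part of `k * w ^ (λ - 1)` for a constant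
`k`, where `w = x + i y` and the power is taken along a branch of the logarithm that is
holomorphic on the sector (the principal branch after rotating the sector by `-ω/2` into the
slit plane). Real parts of holomorphic functions are harmonic in `(x, y)`, and
`p = z * Re (k * w ^ (λ - 1))` is linear in `z`, so `Δp = 0`.
-/

open Complex Filter Topology Set

def xyC : P3 →L[ℝ] ℂ :=
  ofRealCLM.comp (ContinuousLinearMap.fst ℝ ℝ (ℝ × ℝ)) +
    I • ofRealCLM.comp ((ContinuousLinearMap.fst ℝ ℝ ℝ).comp (ContinuousLinearMap.snd ℝ ℝ (ℝ × ℝ)))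

lemma xyC_apply (v : P3) : xyC v = v.1 + v.2.1 * I := by
  simp [xyC, mul_comm]

lemma xyC_polar (r θ z : ℝ) : xyC (r * Real.cos θ, r * Real.sin θ, z) = r * exp (θ * I) := by
  rw [xyC_apply, exp_mul_I]
  push_cast
  ring

lemma eq_of_xyC_eq {v w : P3} (hxy : xyC v = xyC w) (hz : v.2.2 = w.2.2) : v = w := by
  simp only [xyC_apply, Complex.ext_iff, add_re, add_im, ofReal_re, ofReal_im, mul_re, mul_im,
    I_re, I_im] at hxy
  exact Prod.ext (by linarith [hxy.1]) (Prod.ext (by linarith [hxy.2]) hz)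

lemma Filter.EventuallyEq.lap3_eq {f g : P3 → ℝ} {x : P3} (h : f =ᶠ[𝓝 x] g) :
    lap3 f x = lap3 g x := by
  have hpd2 : ∀ v, pd2 f v x = pd2 g v x := by
    intro v
    have hv : (fun y => fderiv ℝ f y v) =ᶠ[𝓝 x] fun y => fderiv ℝ g y v :=
      h.fderiv.fun_comp fun L => L v
    rw [pd2, pd2, hv.fderiv_eq]
  simp only [lap3, hpd2]

section Harmonic

def zMulRe (F : ℂ → ℂ) (v : P3) : ℝ := v.2.2 * (F (xyC v)).re

variable {F : ℂ → ℂ} {U : Set ℂ}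

lemma fderiv_re_comp_xyC_apply {y : P3} (hF : DifferentiableAt ℂ F (xyC y)) (e : P3) :
    fderiv ℝ (fun v => (F (xyC v)).re) y e = (deriv F (xyC y) * xyC e).re := by
  have h : HasFDerivAt (fun v => (F (xyC v)).re) _ y := reCLM.hasFDerivAt.comp y
    ((hF.hasDerivAt.hasFDerivAt.restrictScalars ℝ).comp y xyC.hasFDerivAt)
  rw [h.fderiv]
  simp [mul_comm]

lemma fderiv_zMulRe_apply {y : P3} (hF : DifferentiableAt ℂ F (xyC y)) (e : P3) :
    fderiv ℝ (zMulRe F) y e = e.2.2 * (F (xyC y)).re + y.2.2 * (deriv F (xyC y) * xyC e).re := by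
  have hre : DifferentiableAt ℝ (fun v => (F (xyC v)).re) y :=
    reCLM.differentiableAt.comp y ((hF.restrictScalars ℝ).comp y xyC.differentiableAt)
  have hz : HasFDerivAt (fun v : P3 => v.2.2)
      ((ContinuousLinearMap.snd ℝ ℝ ℝ).comp (ContinuousLinearMap.snd ℝ ℝ (ℝ × ℝ))) y :=
    ((ContinuousLinearMap.snd ℝ ℝ ℝ).comp (ContinuousLinearMap.snd ℝ ℝ (ℝ × ℝ))).hasFDerivAt
  change fderiv ℝ (fun v => v.2.2 * (F (xyC v)).re) y e = _
  rw [(hz.fun_mul hre.hasFDerivAt).fderiv]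
  simp only [add_apply, smul_apply, fderiv_re_comp_xyC_apply hF, smul_eq_mul,
    ContinuousLinearMap.comp_apply, ContinuousLinearMap.coe_snd']
  ring

lemma contDiffAt_zMulRe (hU : IsOpen U) (hF : DifferentiableOn ℂ F U) {x : P3}
    (hx : xyC x ∈ U) : ContDiffAt ℝ 2 (zMulRe F) x := by
  have hFx : ContDiffAt ℂ 2 F (xyC x) := (hF.contDiffOn hU).contDiffAt (hU.mem_nhds hx)
  have hre : ContDiffAt ℝ 2 (fun v => (F (xyC v)).re) x :=
    reCLM.contDiff.contDiffAt.comp x ((hFx.restrict_scalars ℝ).comp x xyC.contDiff.contDiffAt)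
  exact (contDiff_snd.comp contDiff_snd).contDiffAt.mul hre

lemma lap3_zMulRe_eq_zero (hU : IsOpen U) (hF : DifferentiableOn ℂ F U) {x : P3}
    (hx : xyC x ∈ U) : lap3 (zMulRe F) x = 0 := by
  have hdiff : ∀ w ∈ U, DifferentiableAt ℂ F w := fun w hw => hF.differentiableAt (hU.mem_nhds hw)
  have hF' : DifferentiableAt ℂ (deriv F) (xyC x) :=
    (hF.deriv hU).differentiableAt (hU.mem_nhds hx)
  have hnear : ∀ᶠ y in 𝓝 x, xyC y ∈ U :=
    xyC.continuous.continuousAt.preimage_mem_nhds (hU.mem_nhds hx)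
  have h₁ : (fun y => fderiv ℝ (zMulRe F) y (1, 0, 0)) =ᶠ[𝓝 x] zMulRe (deriv F) := by
    filter_upwards [hnear] with y hy
    rw [fderiv_zMulRe_apply (hdiff _ hy)]
    simp [zMulRe, xyC_apply]
  have h₂ : (fun y => fderiv ℝ (zMulRe F) y (0, 1, 0)) =ᶠ[𝓝 x] zMulRe (fun w => deriv F w * I) := by
    filter_upwards [hnear] with y hy
    rw [fderiv_zMulRe_apply (hdiff _ hy)]
    simp [zMulRe, xyC_apply]
  have h₃ : (fun y => fderiv ℝ (zMulRe F) y (0, 0, 1)) =ᶠ[𝓝 x] fun y => (F (xyC y)).re := by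
    filter_upwards [hnear] with y hy
    rw [fderiv_zMulRe_apply (hdiff _ hy)]
    simp [xyC_apply]
  rw [lap3, pd2, pd2, pd2, h₁.fderiv_eq, h₂.fderiv_eq, h₃.fderiv_eq, fderiv_zMulRe_apply hF',
    fderiv_zMulRe_apply (hF'.mul_const I), fderiv_re_comp_xyC_apply (hdiff _ hx),
    deriv_mul_const hF']
  simp [xyC_apply]

end Harmonic

def rotC : ℂ := exp (-(om / 2 : ℝ) * I)

lemma rotC_ne_zero : rotC ≠ 0 := exp_ne_zero _

lemma polarCoord_symm_eq_xyC_mul_rotC (r θ z : ℝ) :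
    Complex.polarCoord.symm (r, θ - om / 2) = xyC (r * Real.cos θ, r * Real.sin θ, z) * rotC := by
  have harg : (θ : ℂ) * I + -(om / 2 : ℝ) * I = (θ - om / 2 : ℝ) * I := by push_cast; ring
  rw [Complex.polarCoord_symm_apply, xyC_polar, rotC, mul_assoc, ← exp_add, harg, exp_mul_I,
    ← ofReal_cos, ← ofReal_sin]

lemma OmegaSet_eq_preimage :
    OmegaSet = (fun v => (xyC v * rotC, v.2.2)) ⁻¹'
      ((Complex.polarCoord.symm '' Ioo 0 1 ×ˢ Ioo (-(om / 2)) (om / 2)) ×ˢ Ioo 0 1) := by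
  ext v
  constructor
  · rintro ⟨r, θ, z, hr₀, hr₁, hθ₀, hθ₁, hz₀, hz₁, rfl⟩
    exact ⟨⟨(r, θ - om / 2), ⟨⟨hr₀, hr₁⟩, by constructor <;> linarith⟩,
      polarCoord_symm_eq_xyC_mul_rotC r θ z⟩, hz₀, hz₁⟩
  · rintro ⟨⟨⟨r, φ⟩, ⟨⟨hr₀, hr₁⟩, hφ₀, hφ₁⟩, hv⟩, hz₀, hz₁⟩
    refine ⟨r, φ + om / 2, v.2.2, hr₀, hr₁, by linarith, by linarith, hz₀, hz₁, ?_⟩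
    refine eq_of_xyC_eq (mul_right_cancel₀ rotC_ne_zero ?_) rfl
    rw [← polarCoord_symm_eq_xyC_mul_rotC, add_sub_cancel_right]
    exact hv.symm

lemma Ioo_prod_subset_polarCoord_target :
    Ioo (0 : ℝ) 1 ×ˢ Ioo (-(om / 2)) (om / 2) ⊆ Complex.polarCoord.target := by
  have : om / 2 ≤ Real.pi := by unfold om; linarith [Real.pi_pos]
  exact prod_mono Ioo_subset_Ioi_self (Ioo_subset_Ioo (by linarith) this)

lemma isOpen_OmegaSet : IsOpen OmegaSet := by
  rw [OmegaSet_eq_preimage]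
  refine (Continuous.isOpen_preimage (by fun_prop) _) (IsOpen.prod ?_ isOpen_Ioo)
  exact Complex.polarCoord.isOpen_image_symm_of_subset_target (isOpen_Ioo.prod isOpen_Ioo)
    Ioo_prod_subset_polarCoord_target

lemma xyC_mul_rotC_mem_slitPlane {v : P3} (hv : v ∈ OmegaSet) : xyC v * rotC ∈ slitPlane := by
  rw [OmegaSet_eq_preimage] at hv
  obtain ⟨⟨q, hq, hqv : Complex.polarCoord.symm q = xyC v * rotC⟩, -⟩ := hv
  rw [← hqv, ← Complex.polarCoord_source]
  exact Complex.polarCoord.map_target (Ioo_prod_subset_polarCoord_target hq)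

/-- A branch of the logarithm with imaginary part in `(ω/2 - π, ω/2 + π]`, an interval
containing the angles `(0, ω)` of the sector. -/
def sectorLog (w : ℂ) : ℂ := log (w * rotC) + (om / 2 : ℝ) * I

lemma differentiableOn_sectorLog :
    DifferentiableOn ℂ sectorLog ((· * rotC) ⁻¹' slitPlane) := fun _ hw =>
  (((differentiableAt_id.mul_const rotC).clog hw).add_const _).differentiableWithinAt

lemma sectorLog_polar {r θ : ℝ} (hr : 0 < r) (hθ₀ : 0 < θ) (hθ₁ : θ < om) :
    sectorLog (r * exp (θ * I)) = Real.log r + θ * I := by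
  have hpi : om / 2 < Real.pi := by unfold om; linarith [Real.pi_pos]
  have hexp : r * exp (θ * I) * rotC = exp (Real.log r + (θ - om / 2 : ℝ) * I) := by
    rw [exp_add, ← ofReal_exp, Real.exp_log hr, rotC, mul_assoc, ← exp_add]
    congr 2
    push_cast
    ring
  have him : (Real.log r + (θ - om / 2 : ℝ) * I : ℂ).im = θ - om / 2 := by simp
  rw [sectorLog, hexp, log_exp (by rw [him]; linarith) (by rw [him]; linarith)]
  push_cast
  ring

/-- The constant comes from writing both terms of `Φ` with `sin a = Re (-i e^{ia})`. -/
def pressureC (lam : ℝ) (w : ℂ) : ℂ :=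
  -2 * lam * I * (exp (om * I) + exp (-(lam * om) * I)) * exp ((lam - 1) * sectorLog w)

lemma differentiableOn_pressureC (lam : ℝ) :
    DifferentiableOn ℂ (pressureC lam) ((· * rotC) ⁻¹' slitPlane) :=
  (differentiableOn_const _).mul (differentiableOn_sectorLog.const_mul _).cexp

lemma re_pressureC_polar (lam : ℝ) {r θ : ℝ} (hr : 0 < r) (hθ₀ : 0 < θ) (hθ₁ : θ < om) :
    (pressureC lam (r * exp (θ * I))).re = r ^ (lam - 1) * Phi lam θ := by
  have hpow : exp ((lam - 1) * (Real.log r + θ * I)) =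
      (r ^ (lam - 1) : ℝ) * exp (((lam - 1) * θ : ℝ) * I) := by
    rw [Real.rpow_def_of_pos hr, ofReal_exp, ← exp_add]
    push_cast
    ring_nf
  have hsum : pressureC lam (r * exp (θ * I)) = (r ^ (lam - 1) : ℝ) * (-2 * lam * I *
      (exp ((om + (lam - 1) * θ : ℝ) * I) + exp (-(lam * om - (lam - 1) * θ : ℝ) * I))) := by
    have h₁ : ((om + (lam - 1) * θ : ℝ) : ℂ) * I = om * I + ((lam - 1) * θ : ℝ) * I := by
      push_cast; ring
    have h₂ : -((lam * om - (lam - 1) * θ : ℝ) : ℂ) * I =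
        -(lam * om) * I + ((lam - 1) * θ : ℝ) * I := by
      push_cast; ring
    rw [pressureC, sectorLog_polar hr hθ₀ hθ₁, hpow, h₁, h₂, exp_add, exp_add]
    ring
  rw [hsum, re_ofReal_mul, ← ofReal_neg]
  simp only [mul_re, mul_im, add_re, add_im, exp_ofReal_mul_I_re, exp_ofReal_mul_I_im, I_re, I_im,
    neg_re, neg_im, ofReal_re, ofReal_im, re_ofNat, im_ofNat, Real.sin_neg, Phi]
  ring

theorem stmt13_general (lam : ℝ)
    (p : P3 → ℝ)
    (hp : ∀ r θ z : ℝ, 0 < r → r < 1 → 0 < θ → θ < om → 0 < z → z < 1 →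
      p (r * Real.cos θ, r * Real.sin θ, z) = ppol lam r θ z) :
    ∀ x ∈ OmegaSet,
      (DifferentiableAt ℝ p x ∧ DifferentiableAt ℝ (fderiv ℝ p) x) ∧ lap3 p x = 0 := by
  intro x hx
  have hU : IsOpen ((· * rotC) ⁻¹' slitPlane) :=
    isOpen_slitPlane.preimage (continuous_mul_const rotC)
  have hxU : xyC x * rotC ∈ slitPlane := xyC_mul_rotC_mem_slitPlane hx
  have hpg : p =ᶠ[𝓝 x] zMulRe (pressureC lam) := by
    filter_upwards [isOpen_OmegaSet.mem_nhds hx] with v hv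
    obtain ⟨r, θ, z, hr₀, hr₁, hθ₀, hθ₁, hz₀, hz₁, rfl⟩ := hv
    rw [hp r θ z hr₀ hr₁ hθ₀ hθ₁ hz₀ hz₁, zMulRe, xyC_polar, re_pressureC_polar lam hr₀ hθ₀ hθ₁,
      ppol]
    ring
  have hg := contDiffAt_zMulRe hU (differentiableOn_pressureC lam) hxU
  refine ⟨⟨hpg.differentiableAt_iff.mpr (hg.differentiableAt two_ne_zero), ?_⟩, ?_⟩
  · exact hpg.fderiv.differentiableAt_iff.mpr
      ((hg.fderiv_right le_rfl).differentiableAt one_ne_zero)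
  · rw [hpg.lap3_eq]
    exact lap3_zMulRe_eq_zero hU (differentiableOn_pressureC lam) hxU

/-- The pressure `p = z r^{λ−1} Φ(φ)` is twice differentiable on `Ω` and harmonic:
`Δp = 0` at every point of `Ω`. -/
theorem stmt13 (lam : ℝ) (hlam0 : 0 < lam) (hlam1 : lam < 1)
    (hlamEq : Real.sin (lam * om) = -lam * Real.sin om)
    (p : P3 → ℝ)
    (hp : ∀ r θ z : ℝ, 0 < r → r < 1 → 0 < θ → θ < om → 0 < z → z < 1 →
      p (r * Real.cos θ, r * Real.sin θ, z) = ppol lam r θ z) :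
    ∀ x ∈ OmegaSet,
      (DifferentiableAt ℝ p x ∧ DifferentiableAt ℝ (fderiv ℝ p) x) ∧ lap3 p x = 0 :=
  stmt13_general lam p hp
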